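/- Let μ be the sparse measure on 2^ℕ (marginals m_{n_k}({1}) = 2^k/(2^k+1) along the sparse index sequence n_0 = 0, n_{k+1} = n_k + 2^{k·(Σ_{i≤k} i)}, and m_n({1}) = 1/2 otherwise), and set p_k = 2^{Σ_{i≤k} i}. For k ≥ 1 let Z_k = {x ∈ 2^ℕ : the number of indices i with n_k < i < n_{k+1} and x(i) = 1 is at most p_k}. Then μ(Z_k) ≤ 2^{−k} for all sufficiently large k; in particular, Σ_{k≥1} μ(Z_k) < ∞. -/

import Mathlib

/-!
Strictly between `n_k` and `n_{k+1}` lie `p_k ^ k - 1` indices, all with fair marginals, so every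
pattern of values there has probability `2 ^ (1 - p_k ^ k)`. A point of `Z_k` is determined on this
window by its set of at most `p_k` ones, and there are at most `(p_k ^ k) ^ p_k` such sets. Writing
`p_k = 2 ^ s`, this gives `μ Z_k ≤ 2 ^ (s k p_k + 1 - p_k ^ k)`, which is at most `2 ^ (-k)` for
`k ≥ 3` since `p_k ^ k` outgrows `s k p_k`. Summability follows by comparison with a geometric
series.
-/

open MeasureTheory Filter Set ENNReal

/-- `μ` is the product of the marginal measures `m n` on `Bool`. -/
def IsProductMeasure (μ : Measure (ℕ → Bool)) (m : ℕ → Measure Bool) : Prop :=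
  ∀ (s : Finset ℕ) (a : ℕ → Bool),
    μ {x | ∀ n ∈ s, x n = a n} = ∏ n ∈ s, m n {a n}

/-- The sparse index sequence: `n₀ = 0` and `n_{k+1} = n_k + 2 ^ (k · Σ_{i ≤ k} i)`. -/
def sparseSeq : ℕ → ℕ
  | 0 => 0
  | k + 1 => sparseSeq k + 2 ^ (k * ∑ i ∈ Finset.range (k + 1), i)

/-- `p_k = 2 ^ (Σ_{i ≤ k} i)`. -/
def sparseP (k : ℕ) : ℕ := 2 ^ (∑ i ∈ Finset.range (k + 1), i)

/-- The marginals of the sparse measure: `m (n_k) {1} = 2^k/(2^k+1)` along the sparse index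
sequence, and `m n {1} = 1/2` for `n` not of the form `n_k`. -/
def IsSparseMarginals (m : ℕ → Measure Bool) : Prop :=
  (∀ k : ℕ, m (sparseSeq k) {true} = (2 ^ k : ℝ≥0∞) / (2 ^ k + 1)) ∧
    ∀ n : ℕ, (∀ k : ℕ, n ≠ sparseSeq k) → m n {true} = 1 / 2

/-- The multiplicative jump `m n {0} / m n {1}` of the sparse measure: `r (n_k) = 2⁻ᵏ` along the
sparse index sequence and `r n = 1` otherwise. -/
def IsSparseJump (r : ℕ → ℝ≥0∞) : Prop :=
  (∀ k : ℕ, r (sparseSeq k) = ((2 : ℝ≥0∞) ^ k)⁻¹) ∧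
    ∀ n : ℕ, (∀ k : ℕ, n ≠ sparseSeq k) → r n = 1

/-- The number of indices `i` with `n_k < i < n_{k+1}` and `x i = 1`. -/
def onesBetween (x : ℕ → Bool) (k : ℕ) : ℕ :=
  ((Finset.Ioo (sparseSeq k) (sparseSeq (k + 1))).filter fun i => x i = true).card

/-- The event `Z_k`: the number of `1`s of `x` strictly between `n_k` and `n_{k+1}` is at most
`p_k`. -/
def sparseEvent (k : ℕ) : Set (ℕ → Bool) := {x | onesBetween x k ≤ sparseP k}

open scoped Finset

theorem Finset.card_filter_powerset_card_le {α : Type*} (S : Finset α) (p : ℕ) :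
    #{A ∈ S.powerset | #A ≤ p} ≤ (#S + 1) ^ p := by
  classical
  have hcover : {A ∈ S.powerset | #A ≤ p} ⊆ (Finset.range (p + 1)).biUnion S.powersetCard := by
    intro A hA
    rw [Finset.mem_filter, Finset.mem_powerset] at hA
    exact Finset.mem_biUnion.2
      ⟨#A, Finset.mem_range.2 (Nat.lt_succ_of_le hA.2), Finset.mem_powersetCard.2 ⟨hA.1, rfl⟩⟩
  calc #{A ∈ S.powerset | #A ≤ p}
      ≤ ∑ j ∈ Finset.range (p + 1), #(S.powersetCard j) :=
        (Finset.card_le_card hcover).trans Finset.card_biUnion_le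
    _ ≤ ∑ j ∈ Finset.range (p + 1), #S ^ j * 1 ^ (p - j) * p.choose j := by
        refine Finset.sum_le_sum fun j hj => ?_
        rw [Finset.card_powersetCard, one_pow, mul_one]
        exact (Nat.choose_le_pow _ _).trans
          (Nat.le_mul_of_pos_right _ (Nat.choose_pos (Finset.mem_range_succ_iff.1 hj)))
    _ = (#S + 1) ^ p := (add_pow _ _ _).symm

namespace IsProductMeasure

variable {μ : Measure (ℕ → Bool)} {m : ℕ → Measure Bool}

theorem isProbabilityMeasure (hμ : IsProductMeasure μ m) : IsProbabilityMeasure μ :=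
  ⟨by simpa using hμ ∅ fun _ => true⟩

theorem measure_cylinder_of_uniform (hμ : IsProductMeasure μ m) {S : Finset ℕ}
    (hS : ∀ n ∈ S, ∀ b, m n {b} = 2⁻¹) (a : ℕ → Bool) :
    μ {x | ∀ n ∈ S, x n = a n} = 2⁻¹ ^ #S := by
  rw [hμ S a, Finset.prod_congr rfl fun n hn => hS n hn (a n), Finset.prod_const]

theorem measure_card_filter_le_le (hμ : IsProductMeasure μ m) {S : Finset ℕ}
    (hS : ∀ n ∈ S, ∀ b, m n {b} = 2⁻¹) (p : ℕ) :
    μ {x | #{n ∈ S | x n = true} ≤ p} ≤ ((#S + 1) ^ p : ℕ) * 2⁻¹ ^ #S := by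
  classical
  set P := {A ∈ S.powerset | #A ≤ p}
  have hcover : {x | #{n ∈ S | x n = true} ≤ p} ⊆
      ⋃ A ∈ P, {x : ℕ → Bool | ∀ n ∈ S, x n = decide (n ∈ A)} := by
    intro x hx
    refine Set.mem_biUnion (x := {n ∈ S | x n = true}) ?_ fun n hn => ?_
    · simpa [P, Finset.filter_subset] using hx
    · cases h : x n <;> simp [hn, h]
  calc μ {x | #{n ∈ S | x n = true} ≤ p}
      ≤ ∑ A ∈ P, μ {x : ℕ → Bool | ∀ n ∈ S, x n = decide (n ∈ A)} :=
        (measure_mono hcover).trans (measure_biUnion_finset_le _ _)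
    _ = #P * 2⁻¹ ^ #S := by
        simp only [hμ.measure_cylinder_of_uniform hS, Finset.sum_const, nsmul_eq_mul]
    _ ≤ ((#S + 1) ^ p : ℕ) * 2⁻¹ ^ #S := by
        gcongr
        exact S.card_filter_powerset_card_le p

end IsProductMeasure

theorem ENNReal.two_pow_mul_inv_two_pow_le {M N k : ℕ} (h : M + k ≤ N) :
    (2 : ℝ≥0∞) ^ M * 2⁻¹ ^ N ≤ 2⁻¹ ^ k := by
  obtain ⟨j, rfl⟩ := Nat.exists_eq_add_of_le (le_of_add_le_left h)
  have hcancel : (2 : ℝ≥0∞) ^ M * 2⁻¹ ^ M = 1 := by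
    rw [← mul_pow, ENNReal.mul_inv_cancel two_ne_zero ofNat_ne_top, one_pow]
  rw [pow_add, ← mul_assoc, hcancel, one_mul]
  exact pow_le_pow_right_of_le_one' (by norm_num) (by omega)

theorem ENNReal.tsum_ne_top_of_eventually_le {f g : ℕ → ℝ≥0∞} (hf : ∀ n, f n ≠ ∞)
    (hg : ∑' n, g n ≠ ∞) (hfg : ∀ᶠ n in atTop, f n ≤ g n) : ∑' n, f n ≠ ∞ := by
  obtain ⟨K, hK⟩ := eventually_atTop.1 hfg
  have htail : ∑' n, f (n + K) ≤ ∑' n, g n :=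
    (ENNReal.tsum_le_tsum fun n => hK (n + K) (Nat.le_add_left K n)).trans
      (ENNReal.tsum_comp_le_tsum_of_injective (add_left_injective K) g)
  rw [(ENNReal.summable.hasSum.sum_range_add).tsum_eq]
  exact ENNReal.add_ne_top.2
    ⟨ENNReal.sum_ne_top.2 fun n _ => hf n, ne_top_of_le_ne_top hg htail⟩

theorem sq_add_add_one_le_two_pow {s : ℕ} (hs : 5 ≤ s) : s ^ 2 + s + 1 ≤ 2 ^ s := by
  induction s, hs using Nat.le_induction with
  | base => norm_num
  | succ s hs ih =>
    calc (s + 1) ^ 2 + (s + 1) + 1 ≤ 2 * (s ^ 2 + s + 1) := by nlinarith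
      _ ≤ 2 ^ (s + 1) := by rw [pow_succ' 2 s]; omega

theorem mul_mul_two_pow_add_le_two_pow_pow {k s : ℕ} (hk : 2 ≤ k) (hks : k ≤ s)
    (hs : 5 ≤ s) : s * k * 2 ^ s + k + 1 ≤ (2 ^ s) ^ k :=
  calc s * k * 2 ^ s + k + 1 ≤ (s ^ 2 + s + 1) * 2 ^ s := by
        have hkP : k ≤ s * 2 ^ s := hks.trans (Nat.le_mul_of_pos_right s (Nat.two_pow_pos s))
        have hskP : s * k * 2 ^ s ≤ s * s * 2 ^ s := by gcongr
        nlinarith [Nat.one_le_two_pow (n := s)]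
    _ ≤ 2 ^ s * 2 ^ s := Nat.mul_le_mul_right _ (sq_add_add_one_le_two_pow hs)
    _ = (2 ^ s) ^ 2 := (sq _).symm
    _ ≤ (2 ^ s) ^ k := Nat.pow_le_pow_right Nat.one_le_two_pow hk

theorem sparseSeq_succ (k : ℕ) : sparseSeq (k + 1) = sparseSeq k + sparseP k ^ k := by
  rw [sparseSeq, sparseP, ← pow_mul, mul_comm]

theorem sparseSeq_strictMono : StrictMono sparseSeq :=
  strictMono_nat_of_lt_succ fun k => by
    rw [sparseSeq_succ]
    exact Nat.lt_add_of_pos_right (Nat.pow_pos (Nat.pow_pos two_pos))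

theorem card_Ioo_sparseSeq (k : ℕ) :
    #(Finset.Ioo (sparseSeq k) (sparseSeq (k + 1))) = sparseP k ^ k - 1 := by
  rw [Nat.card_Ioo, sparseSeq_succ, Nat.add_sub_cancel_left]

theorem ne_sparseSeq_of_mem_Ioo {k n : ℕ}
    (hn : n ∈ Finset.Ioo (sparseSeq k) (sparseSeq (k + 1))) (j : ℕ) : n ≠ sparseSeq j := by
  rintro rfl
  rw [Finset.mem_Ioo, sparseSeq_strictMono.lt_iff_lt, sparseSeq_strictMono.lt_iff_lt] at hn
  omega

theorem IsSparseMarginals.apply_singleton_of_forall_ne {m : ℕ → Measure Bool}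
    [∀ n, IsProbabilityMeasure (m n)] (hm : IsSparseMarginals m) {n : ℕ}
    (hn : ∀ k, n ≠ sparseSeq k) (b : Bool) : m n {b} = 2⁻¹ := by
  have htrue : m n {true} = 2⁻¹ := by rw [hm.2 n hn, one_div]
  cases b
  · rw [show ({false} : Set Bool) = {true}ᶜ from (Bool.compl_singleton true).symm,
      prob_compl_eq_one_sub (measurableSet_singleton _), htrue,
      ENNReal.one_sub_inv_two]
  · exact htrue

theorem measure_sparseEvent_le {m : ℕ → Measure Bool} [∀ n, IsProbabilityMeasure (m n)]
    (hm : IsSparseMarginals m) {μ : Measure (ℕ → Bool)} (hμ : IsProductMeasure μ m) {k : ℕ}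
    (hk : 3 ≤ k) : μ (sparseEvent k) ≤ ((2 : ℝ≥0∞) ^ k)⁻¹ := by
  set s := ∑ i ∈ Finset.range (k + 1), i
  have hs : s * 2 = (k + 1) * k := Finset.sum_range_id_mul_two (k + 1)
  have hp : sparseP k = 2 ^ s := rfl
  have hexp := mul_mul_two_pow_add_le_two_pow_pow (s := s) (by omega : 2 ≤ k) (by nlinarith)
    (by nlinarith)
  have hwindow := hμ.measure_card_filter_le_le (S := Finset.Ioo (sparseSeq k) (sparseSeq (k + 1)))
    (fun n hn => hm.apply_singleton_of_forall_ne (ne_sparseSeq_of_mem_Ioo hn)) (sparseP k)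
  rw [card_Ioo_sparseSeq, hp, Nat.sub_add_cancel (Nat.one_le_pow _ _ (Nat.two_pow_pos s)),
    ← pow_mul, ← pow_mul, ← mul_assoc, Nat.cast_pow, Nat.cast_ofNat] at hwindow
  rw [ENNReal.inv_pow]
  exact hwindow.trans (ENNReal.two_pow_mul_inv_two_pow_le (by omega))

/-- for the sparse product measure, `μ (Z_k) ≤ 2⁻ᵏ` for all sufficiently large
`k`; in particular `Σ_{k ≥ 1} μ (Z_k) < ∞`. -/
theorem sparse_event_measure_summable
    (m : ℕ → Measure Bool) (hprob : ∀ n, IsProbabilityMeasure (m n))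
    (hm : IsSparseMarginals m)
    (μ : Measure (ℕ → Bool)) (hμ : IsProductMeasure μ m) :
    (∀ᶠ k in atTop, μ (sparseEvent k) ≤ ((2 : ℝ≥0∞) ^ k)⁻¹) ∧
      (∑' k : ℕ, μ (sparseEvent (k + 1))) ≠ ⊤ := by
  have hev : ∀ᶠ k in atTop, μ (sparseEvent k) ≤ ((2 : ℝ≥0∞) ^ k)⁻¹ :=
    eventually_atTop.2 ⟨3, fun k hk => measure_sparseEvent_le hm hμ hk⟩
  have := hμ.isProbabilityMeasure
  refine ⟨hev, ENNReal.tsum_ne_top_of_eventually_le (fun k => measure_ne_top μ _) ?_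
    ((tendsto_add_atTop_nat 1).eventually hev)⟩
  simp [ENNReal.inv_pow, ENNReal.tsum_geometric_add_one]
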